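/- arXiv:2304.10734 — 2 statements merged into one kernel-verified Lean document; each statement's English description precedes it below -/
import Mathlib

section
/- Let a, b > -1/2, β > 0 and N ≥ 1. Define Ψ : ℝ^N → (-∞, ∞] by Ψ(x) = (2a+1)∑_i (−log sin(x_i/2)) + (2b+1)∑_i (−log cos(x_i/2)) + β ∑_{i<j} [−log sin(x_i/2 + x_j/2) − log sin(x_j/2 − x_i/2)] on the Weyl chamber A = {0 < x₁ < ⋯ < x_N < π}, and Ψ = ∞ otherwise. Then the function x ↦ Ψ(x) − (K/2)‖x‖² with K = (a+b+1)/2 is convex on A; in particular Ψ is K-convex. -/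
open Real Set Finset

/-!
Since `(-log sin)'' = 1 / sin² ≥ 1`, the function `u ↦ -log (sin u) - u² / 2` is convex on
`(0, π)`, and by `cos u = sin (u + π / 2)` so is `u ↦ -log (cos u) - u² / 2` on `(-π/2, π/2)`.
At half angles the weights `2a + 1, 2b + 1 > 0` absorb `(2a + 1)/8 + (2b + 1)/8 = K/2` of the
quadratic term, so `Ψ - (K/2)‖x‖²` is a sum of convex functions of single coordinates plus
`β > 0` times `-log sin` of the linear forms `(xᵢ + xⱼ)/2` and `(xⱼ - xᵢ)/2`, which take values
in `(0, π)` on the chamber.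
-/

theorem convexOn_finset_sum {𝕜 E β ι : Type*} [Semiring 𝕜] [PartialOrder 𝕜] [AddCommMonoid E]
    [AddCommMonoid β] [PartialOrder β] [IsOrderedAddMonoid β] [SMul 𝕜 E] [Module 𝕜 β]
    {s : Set E} (hs : Convex 𝕜 s) {t : Finset ι} {f : ι → E → β}
    (hf : ∀ i ∈ t, ConvexOn 𝕜 s (f i)) : ConvexOn 𝕜 s fun x => ∑ i ∈ t, f i x := by
  induction t using Finset.cons_induction with
  | empty => simpa using convexOn_const (0 : β) hs
  | cons i t hi ih =>
    simp only [sum_cons]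
    exact (hf i (mem_cons_self i t)).add (ih fun j hj => hf j (mem_cons_of_mem hj))

theorem convexOn_neg_log_sin_sub_sq :
    ConvexOn ℝ (Ioo 0 π) fun u => -log (sin u) - u ^ 2 / 2 := by
  have hsin : ∀ u ∈ Ioo 0 π, sin u ≠ 0 := fun u hu => (sin_pos_of_pos_of_lt_pi hu.1 hu.2).ne'
  have hf' : ∀ u ∈ Ioo 0 π,
      HasDerivAt (fun u => -log (sin u) - u ^ 2 / 2) (-(cos u / sin u) - u) u := fun u hu =>
    (((hasDerivAt_sin u).log (hsin u hu)).neg.sub ((hasDerivAt_pow 2 u).div_const 2)).congr_deriv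
      (by ring)
  have hf'' : ∀ u ∈ Ioo 0 π,
      HasDerivAt (fun u => -(cos u / sin u) - u) ((cos u / sin u) ^ 2) u := fun u hu =>
    (((hasDerivAt_cos u).div (hasDerivAt_sin u) (hsin u hu)).neg.sub
      (hasDerivAt_id u)).congr_deriv (by have := hsin u hu; field_simp; ring)
  refine convexOn_of_hasDerivWithinAt2_nonneg (convex_Ioo 0 π)
    (fun u hu => (hf' u hu).continuousAt.continuousWithinAt)
    (by simpa only [interior_Ioo] using fun u hu => (hf' u hu).hasDerivWithinAt)
    (by simpa only [interior_Ioo] using fun u hu => (hf'' u hu).hasDerivWithinAt)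
    fun u _ => sq_nonneg _

theorem convexOn_neg_log_sin : ConvexOn ℝ (Ioo 0 π) fun u => -log (sin u) :=
  (convexOn_neg_log_sin_sub_sq.add <| (even_two.convexOn_pow.subset (subset_univ _)
    (convex_Ioo 0 π)).smul (by norm_num : (0 : ℝ) ≤ 1 / 2)).congr fun u _ => by
      simp only [Pi.add_apply, smul_eq_mul]; ring

theorem convexOn_neg_log_cos_sub_sq :
    ConvexOn ℝ (Ioo (-(π / 2)) (π / 2)) fun u => -log (cos u) - u ^ 2 / 2 := by
  have hG := convexOn_neg_log_sin_sub_sq.translate_left (π / 2)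
  rw [preimage_const_add_Ioo, zero_sub, show π - π / 2 = π / 2 by ring] at hG
  refine ((hG.add ((convexOn_id hG.1).smul (by positivity : 0 ≤ π / 2))).add_const
    (π ^ 2 / 8)).congr fun u _ => ?_
  simp only [Pi.add_apply, Function.comp_apply, id, smul_eq_mul, sin_add_pi_div_two]
  ring

theorem convexOn_single_particle_potential {a b : ℝ} (ha : -1 / 2 < a) (hb : -1 / 2 < b) :
    ConvexOn ℝ (Ioo 0 π) fun t =>
      (2 * a + 1) * -log (sin (t / 2)) + (2 * b + 1) * -log (cos (t / 2))
        - (a + b + 1) / 4 * t ^ 2 := by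
  let half : ℝ →ₗ[ℝ] ℝ := (2⁻¹ : ℝ) • LinearMap.id
  have hsin := (convexOn_neg_log_sin_sub_sq.comp_linearMap half).subset
    (fun t ht => show 2⁻¹ * t ∈ Ioo 0 π by constructor <;> linarith [ht.1, ht.2])
    (convex_Ioo 0 π)
  have hcos := (convexOn_neg_log_cos_sub_sq.comp_linearMap half).subset
    (fun t ht => show 2⁻¹ * t ∈ Ioo (-(π / 2)) (π / 2) by constructor <;> linarith [ht.1, ht.2])
    (convex_Ioo 0 π)
  refine ((hsin.smul (by linarith : 0 ≤ 2 * a + 1)).add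
    (hcos.smul (by linarith : 0 ≤ 2 * b + 1))).congr fun t _ => ?_
  simp only [Pi.add_apply, Function.comp_apply, smul_eq_mul, half, LinearMap.smul_apply,
    LinearMap.id_apply, inv_mul_eq_div]
  ring

def weylChamber (N : ℕ) : Set (Fin N → ℝ) := {x | StrictMono x ∧ ∀ i, x i ∈ Ioo 0 π}

theorem convex_weylChamber (N : ℕ) : Convex ℝ (weylChamber N) :=
  convex_iff_forall_pos.2 fun _ hx _ hy _ _ ha hb hab =>
    ⟨fun _ _ hij => add_lt_add (mul_lt_mul_of_pos_left (hx.1 hij) ha)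
        (mul_lt_mul_of_pos_left (hy.1 hij) hb),
      fun i => convex_Ioo 0 π (hx.2 i) (hy.2 i) ha.le hb.le hab⟩

theorem convexOn_pair_interaction {N : ℕ} {i j : Fin N} (hij : i < j) :
    ConvexOn ℝ (weylChamber N)
      fun x => -log (sin (x i / 2 + x j / 2)) - log (sin (x j / 2 - x i / 2)) := by
  let coord (k : Fin N) : (Fin N → ℝ) →ₗ[ℝ] ℝ := LinearMap.proj k
  have hcomp (ℓ : (Fin N → ℝ) →ₗ[ℝ] ℝ) (hℓ : MapsTo ℓ (weylChamber N) (Ioo 0 π)) :=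
    (convexOn_neg_log_sin.comp_linearMap ℓ).subset hℓ (convex_weylChamber N)
  refine ((hcomp ((2⁻¹ : ℝ) • (coord i + coord j)) ?_).add
    (hcomp ((2⁻¹ : ℝ) • (coord j - coord i)) ?_)).congr fun x _ => ?_
  · rintro x ⟨-, hx⟩
    change 2⁻¹ * (x i + x j) ∈ Ioo 0 π
    constructor <;> linarith [(hx i).1, (hx j).1, (hx i).2, (hx j).2]
  · rintro x ⟨hmono, hx⟩
    change 2⁻¹ * (x j - x i) ∈ Ioo 0 π
    constructor <;> linarith [(hx i).1, (hx j).2, hmono hij]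
  · change -log (sin (2⁻¹ * (x i + x j))) + -log (sin (2⁻¹ * (x j - x i))) = _
    ring_nf

/-- K-convexity of the potential `Ψ` of the trigonometric beta Jacobi SDE:
for `a, b > -1/2` and `β > 0`, the function `x ↦ Ψ(x) − (K/2)‖x‖²` with
`K = (a+b+1)/2` is convex on the Weyl chamber `A = {0 < x₁ < ⋯ < x_N < π}`. -/
theorem psi_K_convex (N : ℕ) (a b β : ℝ)
    (ha : -1/2 < a) (hb : -1/2 < b) (hβ : 0 < β) :
    ConvexOn ℝ
      {x : Fin N → ℝ | StrictMono x ∧ ∀ i, x i ∈ Set.Ioo 0 π}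
      (fun x : Fin N → ℝ =>
        ((2*a + 1) * ∑ i, (-Real.log (Real.sin (x i / 2)))
          + (2*b + 1) * ∑ i, (-Real.log (Real.cos (x i / 2)))
          + β * ∑ i, ∑ j, if i < j then
              (-Real.log (Real.sin (x i / 2 + x j / 2))
                - Real.log (Real.sin (x j / 2 - x i / 2))) else 0)
        - (a + b + 1) / 2 / 2 * ∑ i, (x i)^2) := by
  have hA := convex_weylChamber N
  have hsingle (i : Fin N) :=
    ((convexOn_single_particle_potential ha hb).comp_linearMap (LinearMap.proj i)).subset
      (fun x hx => hx.2 i) hA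
  have hpair (i j : Fin N) : ConvexOn ℝ (weylChamber N) fun x =>
      if i < j then -log (sin (x i / 2 + x j / 2)) - log (sin (x j / 2 - x i / 2)) else 0 := by
    split_ifs with hij
    exacts [convexOn_pair_interaction hij, convexOn_const 0 hA]
  have hpairs := convexOn_finset_sum (t := univ) hA fun i _ =>
    convexOn_finset_sum (t := univ) hA fun j _ => hpair i j
  refine ((convexOn_finset_sum (t := univ) hA fun i _ => hsingle i).add
    (hpairs.smul hβ.le)).congr fun x _ => ?_
  simp only [Pi.add_apply, Function.comp_apply, LinearMap.proj_apply, smul_eq_mul, ← mul_sum,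
    sum_add_distrib, sum_sub_distrib]
  ring
end

section
/- For each N, let M^{(N)} be a continuous martingale with M^{(N)}_0 = 0 a.s. and [M^{(N)}]_∞ = ∞ a.s., and suppose the quadratic variation [M^{(N)}]_t converges in probability in C([0,T]) (with the sup norm) to a deterministic continuous function m_t. Let B^{(N)} be the DDS Brownian motion with M^{(N)}_t = B^{(N)}_{[M^{(N)}]_t}, and set A^{(N)}_t = B^{(N)}_{m_t}. Then sup_{0 ≤ t ≤ T} |M^{(N)}_t − A^{(N)}_t| → 0 in probability as N → ∞. -/
/-!
On the event `sup_{t ≤ T} |[M]_t - m_t| < δ` we have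
`|M_t - A_t| = |B_{[M]_t} - B_{m_t}|` with both times in `[0, K + 1]`, `K = max m`, at distance
`< δ`, so a large deviation forces an oscillation of `B` at scale `δ` on `[0, K + 1]`. Detected on
the countable grid `{j / n}`, this oscillation is an event about the path of `B` on `ℝ≥0`, whose law
is the Wiener measure for every `N`; its probability is therefore independent of `N` and tends to
`0` with `δ` by continuity of the Brownian paths.
-/

open MeasureTheory ProbabilityTheory Filter Set

/-- A standard one-dimensional Brownian motion (indexed by `t ≥ 0`). -/
def IsStandardBM {Ω : Type*} [MeasurableSpace Ω] (P : Measure Ω)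
    (B : ℝ → Ω → ℝ) : Prop :=
  (∀ᵐ ω ∂P, B 0 ω = 0) ∧
  (∀ᵐ ω ∂P, Continuous fun t => B t ω) ∧
  (∀ t : ℝ, Measurable (B t)) ∧
  (∀ s t : ℝ, 0 ≤ s → s ≤ t →
    Measure.map (fun ω => B t ω - B s ω) P = gaussianReal 0 (Real.toNNReal (t - s))) ∧
  (∀ u : ℕ → ℝ, Monotone u → (∀ n, 0 ≤ u n) →
    iIndepFun
      (fun n ω => B (u (n + 1)) ω - B (u n) ω) P)

open scoped NNReal ENNReal Topology

theorem NNReal.tendsto_nat_floor_mul_div_atTop (s : ℝ≥0) :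
    Tendsto (fun n : ℕ ↦ (⌊(s : ℝ) * n⌋₊ / n : ℝ≥0)) atTop (𝓝 s) := by
  rw [← NNReal.tendsto_coe]
  simpa [Function.comp_def] using
    (_root_.tendsto_nat_floor_mul_div_atTop s.2).comp tendsto_natCast_atTop_atTop

theorem NNReal.nat_floor_mul_div_le (s : ℝ≥0) (n : ℕ) : (⌊(s : ℝ) * n⌋₊ / n : ℝ≥0) ≤ s := by
  rw [← NNReal.coe_le_coe]
  push_cast
  exact div_le_of_le_mul₀ n.cast_nonneg s.2 (Nat.floor_le (by positivity))

theorem IsCompact.le_iSup_of_continuousOn {α : Type*} [TopologicalSpace α] {S : Set α}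
    (hS : IsCompact S) {g : α → ℝ} (hg : ContinuousOn g S) {t : α} (ht : t ∈ S) :
    g t ≤ ⨆ s : S, g s :=
  le_ciSup (f := fun s : S ↦ g s) (by rw [← image_eq_range]; exact hS.bddAbove_image hg) ⟨t, ht⟩

theorem ENNReal.tendsto_zero_of_le_add {α ι : Type*} {l : Filter α} {l' : Filter ι} [l'.NeBot]
    {a : α → ℝ≥0∞} {b : ι → α → ℝ≥0∞} {c : ι → ℝ≥0∞} (hle : ∀ k N, a N ≤ b k N + c k)
    (hb : ∀ k, Tendsto (b k) l (𝓝 0)) (hc : Tendsto c l' (𝓝 0)) : Tendsto a l (𝓝 0) := by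
  rw [ENNReal.tendsto_nhds_zero]
  intro η hη
  have hη2 : 0 < η / 2 := ENNReal.half_pos hη.ne'
  obtain ⟨k, hk⟩ := (hc.eventually (gt_mem_nhds hη2)).exists
  filter_upwards [(hb k).eventually (gt_mem_nhds hη2)] with N hN
  calc a N ≤ b k N + c k := hle k N
    _ ≤ η / 2 + η / 2 := add_le_add hN.le hk.le
    _ = η := ENNReal.add_halves η

/-- The modulus of continuity on `[0, K]` at scale `δ` exceeds `ε`, tested on the countable grid
`{j / n}` so that the set is measurable for the product σ-algebra. -/
def gridOscillationSet (K : ℝ≥0) (δ ε : ℝ) : Set (ℝ≥0 → ℝ) :=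
  {f | ∃ n j k : ℕ, (j / n : ℝ≥0) ≤ K ∧ (k / n : ℝ≥0) ≤ K ∧
    dist (j / n : ℝ≥0) (k / n) < δ ∧ ε < |f (j / n) - f (k / n)|}

section gridOscillationSet

variable {K : ℝ≥0} {δ ε : ℝ}

theorem measurableSet_gridOscillationSet (K : ℝ≥0) (δ ε : ℝ) :
    MeasurableSet (gridOscillationSet K δ ε) := by
  simp only [gridOscillationSet, ofPred_exists]
  refine .iUnion fun n ↦ .iUnion fun j ↦ .iUnion fun k ↦ ?_
  refine .inter (.const _) (.inter (.const _) (.inter (.const _) ?_))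
  exact measurableSet_lt measurable_const
    ((measurable_pi_apply (j / n : ℝ≥0)).sub (measurable_pi_apply (k / n : ℝ≥0))).abs

theorem gridOscillationSet_mono {δ' : ℝ} (h : δ ≤ δ') :
    gridOscillationSet K δ ε ⊆ gridOscillationSet K δ' ε := by
  rintro f ⟨n, j, k, hj, hk, hjk, hf⟩
  exact ⟨n, j, k, hj, hk, hjk.trans_le h, hf⟩

theorem mem_gridOscillationSet {f : ℝ≥0 → ℝ} (hf : Continuous f) {s t : ℝ≥0}
    (hs : s ≤ K) (ht : t ≤ K) (hst : dist s t < δ) (hε : ε < |f s - f t|) :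
    f ∈ gridOscillationSet K δ ε := by
  have hs' := s.tendsto_nat_floor_mul_div_atTop
  have ht' := t.tendsto_nat_floor_mul_div_atTop
  have hdist := (hs'.dist ht').eventually (gt_mem_nhds hst)
  have hincr := ((hf.tendsto s).comp hs' |>.sub <| (hf.tendsto t).comp ht').abs.eventually
    (lt_mem_nhds hε)
  obtain ⟨n, hdist, hincr⟩ := (hdist.and hincr).exists
  exact ⟨n, _, _, (s.nat_floor_mul_div_le n).trans hs, (t.nat_floor_mul_div_le n).trans ht,
    hdist, hincr⟩

theorem exists_notMem_gridOscillationSet {f : ℝ≥0 → ℝ} (hf : Continuous f) (K : ℝ≥0)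
    (hε : 0 < ε) : ∃ δ > 0, f ∉ gridOscillationSet K δ ε := by
  have hK : IsCompact (Iic K) := by rw [← Icc_bot]; exact isCompact_Icc
  obtain ⟨δ, hδ, hf⟩ := Metric.uniformContinuousOn_iff.1
    (hK.uniformContinuousOn_of_continuous hf.continuousOn) ε hε
  exact ⟨δ, hδ, fun ⟨n, j, k, hj, hk, hjk, hjkε⟩ ↦ hjkε.not_gt (hf _ hj _ hk hjk)⟩

theorem mem_gridOscillationSet_of_le_iSup {f : ℝ → ℝ} (hf : Continuous f) {q m : ℝ → ℝ}
    {T : ℝ} (hq : ∀ t ∈ Icc 0 T, 0 ≤ q t) (hm : ∀ t ∈ Icc 0 T, 0 ≤ m t ∧ m t ≤ K)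
    (hqm : ∀ t ∈ Icc 0 T, |q t - m t| < δ) (hδ : δ ≤ 1) (hε : 0 < ε)
    (h : ε ≤ ⨆ t : Icc 0 T, |f (q t) - f (m t)|) :
    (fun t : ℝ≥0 ↦ f t) ∈ gridOscillationSet (K + 1) δ (ε / 2) := by
  have : Nonempty (Icc 0 T) := by
    by_contra! hempty
    rw [Real.iSup_of_isEmpty] at h
    linarith
  obtain ⟨⟨t, ht⟩, hlt⟩ := exists_lt_of_lt_ciSup ((half_lt_self hε).trans_le h)
  have hqmt := abs_lt.1 (hqm t ht)
  have hmt := (hm t ht).2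
  exact mem_gridOscillationSet (hf.comp continuous_subtype_val) (s := ⟨q t, hq t ht⟩)
    (t := ⟨m t, (hm t ht).1⟩) (by change q t ≤ K + 1; linarith) (by change m t ≤ K + 1; linarith)
    (hqm t ht) hlt

end gridOscillationSet

namespace IsStandardBM

variable {Ω Ω' : Type*} {mΩ : MeasurableSpace Ω} {mΩ' : MeasurableSpace Ω'}
  {P : Measure Ω} {P' : Measure Ω'} {B : ℝ → Ω → ℝ} {B' : ℝ → Ω' → ℝ}

theorem measurable_paths (hB : IsStandardBM P B) : Measurable fun ω (t : ℝ≥0) ↦ B t ω :=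
  measurable_pi_lambda _ fun t ↦ hB.2.2.1 t

theorem isPreBrownianReal (hB : IsStandardBM P B) : IsPreBrownianReal (fun t : ℝ≥0 ↦ B t) P := by
  obtain ⟨hB0, -, hmeas, hincr, hindep⟩ := hB
  refine HasIndepIncrements.isPreBrownianReal_of_hasLaw (fun t ↦ ?_)
    (hasIndepIncrements_iff_nat.2 fun u hu ↦ hindep _ (NNReal.coe_mono.comp hu) fun n ↦ (u n).2)
  have hlaw : HasLaw (fun ω ↦ B t ω - B 0 ω) (gaussianReal 0 t) P :=
    ⟨(hmeas t).sub (hmeas 0) |>.aemeasurable, by simpa using hincr 0 t le_rfl t.2⟩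
  exact hlaw.congr (by filter_upwards [hB0] with ω hω; simp [hω])

theorem isProjectiveLimit_map (hB : IsStandardBM P B) :
    IsProjectiveLimit (P.map fun ω (t : ℝ≥0) ↦ B t ω) BrownianReal.projectiveFamily := fun I ↦ by
  rw [Measure.map_map (by fun_prop) hB.measurable_paths]
  exact (hB.isPreBrownianReal.hasLaw I).map_eq

theorem map_eq (hB : IsStandardBM P B) (hB' : IsStandardBM P' B') :
    P.map (fun ω (t : ℝ≥0) ↦ B t ω) = P'.map (fun ω (t : ℝ≥0) ↦ B' t ω) :=
  hB.isProjectiveLimit_map.unique hB'.isProjectiveLimit_map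

theorem measure_preimage_eq (hB : IsStandardBM P B) (hB' : IsStandardBM P' B')
    {S : Set (ℝ≥0 → ℝ)} (hS : MeasurableSet S) :
    P ((fun ω (t : ℝ≥0) ↦ B t ω) ⁻¹' S) = P' ((fun ω (t : ℝ≥0) ↦ B' t ω) ⁻¹' S) := by
  rw [← Measure.map_apply hB.measurable_paths hS, hB.map_eq hB',
    Measure.map_apply hB'.measurable_paths hS]

theorem tendsto_measure_gridOscillationSet [IsFiniteMeasure P] (hB : IsStandardBM P B)
    (K : ℝ≥0) {ε : ℝ} (hε : 0 < ε) :
    Tendsto (fun k : ℕ ↦ P ((fun ω (t : ℝ≥0) ↦ B t ω) ⁻¹'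
      gridOscillationSet K (1 / (k + 1)) ε)) atTop (𝓝 0) := by
  have hanti : Antitone fun k : ℕ ↦ gridOscillationSet K (1 / (k + 1)) ε :=
    fun k l hkl ↦ gridOscillationSet_mono (Nat.one_div_le_one_div hkl)
  have hlim := tendsto_measure_iInter_atTop
    (fun k ↦ (hB.measurable_paths (measurableSet_gridOscillationSet K _ ε)).nullMeasurableSet)
    (fun k l hkl ↦ preimage_mono (hanti hkl)) ⟨0, measure_ne_top P _⟩
  suffices P (⋂ k : ℕ, (fun ω (t : ℝ≥0) ↦ B t ω) ⁻¹' gridOscillationSet K (1 / (k + 1)) ε) = 0 by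
    rwa [this] at hlim
  refine measure_mono_null (t := {ω | ¬Continuous fun t ↦ B t ω})
    (fun ω hω (hcont : Continuous fun t ↦ B t ω) ↦ ?_) (ae_iff.1 hB.2.1)
  obtain ⟨δ, hδ, hnot⟩ :=
    exists_notMem_gridOscillationSet (hcont.comp continuous_subtype_val) K hε
  obtain ⟨k, hk⟩ := exists_nat_one_div_lt hδ
  exact hnot (gridOscillationSet_mono hk.le (mem_iInter.1 hω k))

end IsStandardBM

section TimeChange

variable {Ω : Type*} {mΩ : MeasurableSpace Ω} {P : Measure Ω}

theorem measure_le_add_measure_gridOscillationSet {M Q B : ℝ → Ω → ℝ} {m : ℝ → ℝ} {T : ℝ}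
    {K : ℝ≥0} {δ ε : ℝ} (hQ0 : ∀ᵐ ω ∂P, Q 0 ω = 0) (hQmono : ∀ᵐ ω ∂P, Monotone fun t ↦ Q t ω)
    (hQcont : ∀ᵐ ω ∂P, Continuous fun t ↦ Q t ω) (hBcont : ∀ᵐ ω ∂P, Continuous fun t ↦ B t ω)
    (hDDS : ∀ᵐ ω ∂P, ∀ t : ℝ, 0 ≤ t → M t ω = B (Q t ω) ω) (hmcont : ContinuousOn m (Icc 0 T))
    (hm : ∀ t ∈ Icc 0 T, 0 ≤ m t ∧ m t ≤ K) (hδ : δ ≤ 1) (hε : 0 < ε) :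
    P {ω | ε ≤ ⨆ t : Icc (0 : ℝ) T, |M t ω - B (m t) ω|} ≤
      P {ω | δ ≤ ⨆ t : Icc (0 : ℝ) T, |Q t ω - m t|} +
        P ((fun ω (t : ℝ≥0) ↦ B t ω) ⁻¹' gridOscillationSet (K + 1) δ (ε / 2)) := by
  refine (measure_mono_ae ?_).trans (measure_union_le _ _)
  filter_upwards [hQ0, hQmono, hQcont, hBcont, hDDS] with ω h0 hmono hcont hBc hD hω
  refine or_iff_not_imp_left.2 fun hQm ↦ ?_
  replace hQm : ⨆ t : Icc (0 : ℝ) T, |Q t ω - m t| < δ := not_le.1 hQm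
  refine mem_gridOscillationSet_of_le_iSup hBc (q := (Q · ω)) (fun t ht ↦ h0 ▸ hmono ht.1) hm
    (fun t ht ↦ ?_) hδ hε ?_
  · exact (isCompact_Icc.le_iSup_of_continuousOn
      ((hcont.continuousOn.sub hmcont).abs) ht).trans_lt hQm
  · calc ε ≤ _ := hω
      _ = _ := iSup_congr fun t ↦ by rw [hD t t.2.1]

theorem nonneg_of_tendsto_measure_le_iSup_abs_sub [IsProbabilityMeasure P] {Q : ℕ → ℝ → Ω → ℝ}
    {m : ℝ → ℝ} {T t₀ : ℝ} (ht₀ : t₀ ∈ Icc 0 T)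
    (hQ : ∀ N, ∀ᵐ ω ∂P, 0 ≤ Q N t₀ ω ∧ ContinuousOn (Q N · ω) (Icc 0 T))
    (hm : ContinuousOn m (Icc 0 T))
    (hconv : ∀ ε : ℝ, 0 < ε →
      Tendsto (fun N ↦ P {ω | ε ≤ ⨆ t : Icc (0 : ℝ) T, |Q N t ω - m t|}) atTop (𝓝 0)) :
    0 ≤ m t₀ := by
  by_contra! hneg
  have hone : ∀ N, P {ω | -m t₀ ≤ ⨆ t : Icc (0 : ℝ) T, |Q N t ω - m t|} = 1 := fun N ↦ by
    rw [← measure_univ (μ := P)]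
    refine measure_congr (eventuallyEq_univ.2 ?_)
    filter_upwards [hQ N] with ω ⟨hnn, hcont⟩
    calc -m t₀ ≤ |Q N t₀ ω - m t₀| := by rw [abs_of_nonneg (by linarith)]; linarith
      _ ≤ _ := isCompact_Icc.le_iSup_of_continuousOn (hcont.sub hm).abs ht₀
  exact one_ne_zero (tendsto_const_nhds_iff.1 ((hconv _ (neg_pos.2 hneg)).congr hone))

end TimeChange

theorem time_changed_martingale_approx_general
    {Ω : Type*} {mΩ : MeasurableSpace Ω} (P : Measure Ω) [IsProbabilityMeasure P]
    (T : ℝ)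
    (M Q B A : ℕ → ℝ → Ω → ℝ) (m : ℝ → ℝ)
    (hQ0 : ∀ N, ∀ᵐ ω ∂P, Q N 0 ω = 0)
    (hQmono : ∀ N, ∀ᵐ ω ∂P, Monotone fun t => Q N t ω)
    (hQcont : ∀ N, ∀ᵐ ω ∂P, Continuous fun t => Q N t ω)
    (hBM : ∀ N, IsStandardBM P (B N))
    (hDDS : ∀ N, ∀ᵐ ω ∂P, ∀ t : ℝ, 0 ≤ t → M N t ω = B N (Q N t ω) ω)
    (hmcont : ContinuousOn m (Set.Icc 0 T))
    (hQconv : ∀ ε : ℝ, 0 < ε →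
      Tendsto (fun N => P {ω | ε ≤ ⨆ t : Set.Icc (0:ℝ) T, |Q N t ω - m t|})
        atTop (nhds 0))
    (hA : ∀ N t ω, A N t ω = B N (m t) ω) :
    ∀ ε : ℝ, 0 < ε →
      Tendsto (fun N => P {ω | ε ≤ ⨆ t : Set.Icc (0:ℝ) T, |M N t ω - A N t ω|})
        atTop (nhds 0) := by
  intro ε hε
  obtain ⟨K, hK⟩ := isCompact_Icc.bddAbove_image hmcont
  -- `B N` is only specified at nonnegative times, so we need `m ≥ 0`.
  have hm : ∀ t ∈ Icc 0 T, 0 ≤ m t ∧ m t ≤ K.toNNReal := fun t ht ↦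
    ⟨nonneg_of_tendsto_measure_le_iSup_abs_sub ht (fun N ↦ by
        filter_upwards [hQ0 N, hQmono N, hQcont N] with ω h0 hmono hcont
        exact ⟨h0 ▸ hmono ht.1, hcont.continuousOn⟩) hmcont hQconv,
      (hK (mem_image_of_mem m ht)).trans K.le_coe_toNNReal⟩
  refine ENNReal.tendsto_zero_of_le_add
    (b := fun (k : ℕ) N ↦ P {ω | 1 / ((k : ℝ) + 1) ≤ ⨆ t : Icc (0 : ℝ) T, |Q N t ω - m t|})
    (fun k N ↦ ?_) (fun k ↦ hQconv _ Nat.one_div_pos_of_nat)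
    ((hBM 0).tendsto_measure_gridOscillationSet (K.toNNReal + 1) (half_pos hε))
  simp only [hA]
  rw [← (hBM N).measure_preimage_eq (hBM 0) (measurableSet_gridOscillationSet _ _ _)]
  exact measure_le_add_measure_gridOscillationSet (hQ0 N) (hQmono N) (hQcont N) (hBM N).2.1
    (hDDS N) hmcont hm ((div_le_one₀ (by positivity)).2 (by simp)) hε

/-- Time-changed approximation of martingales (Lemma on DDS time change):
if the continuous martingales `M^{(N)}` start at `0`, have quadratic variations
`Q^{(N)}` with `Q^{(N)}_∞ = ∞` a.s. converging in probability in `C([0,T])`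
to a deterministic function `m`, and `M^{(N)}_t = B^{(N)}_{Q^{(N)}_t}` for the
DDS Brownian motions `B^{(N)}`, then for `A^{(N)}_t = B^{(N)}_{m_t}` one has
`sup_{0 ≤ t ≤ T} |M^{(N)}_t − A^{(N)}_t| → 0` in probability. -/
theorem time_changed_martingale_approx
    {Ω : Type*} {mΩ : MeasurableSpace Ω} (P : Measure Ω) [IsProbabilityMeasure P]
    (ℱ : Filtration ℝ mΩ) (T : ℝ) (hT : 0 < T)
    (M Q B A : ℕ → ℝ → Ω → ℝ) (m : ℝ → ℝ)
    (hmart : ∀ N, Martingale (M N) ℱ P)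
    (hMcont : ∀ N, ∀ᵐ ω ∂P, Continuous fun t => M N t ω)
    (hM0 : ∀ N, ∀ᵐ ω ∂P, M N 0 ω = 0)
    (hQ0 : ∀ N, ∀ᵐ ω ∂P, Q N 0 ω = 0)
    (hQmono : ∀ N, ∀ᵐ ω ∂P, Monotone fun t => Q N t ω)
    (hQcont : ∀ N, ∀ᵐ ω ∂P, Continuous fun t => Q N t ω)
    (hQinf : ∀ N, ∀ᵐ ω ∂P, Tendsto (fun t => Q N t ω) atTop atTop)
    (hBM : ∀ N, IsStandardBM P (B N))
    (hDDS : ∀ N, ∀ᵐ ω ∂P, ∀ t : ℝ, 0 ≤ t → M N t ω = B N (Q N t ω) ω)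
    (hmcont : ContinuousOn m (Set.Icc 0 T))
    (hQconv : ∀ ε : ℝ, 0 < ε →
      Tendsto (fun N => P {ω | ε ≤ ⨆ t : Set.Icc (0:ℝ) T, |Q N t ω - m t|})
        atTop (nhds 0))
    (hA : ∀ N t ω, A N t ω = B N (m t) ω) :
    ∀ ε : ℝ, 0 < ε →
      Tendsto (fun N => P {ω | ε ≤ ⨆ t : Set.Icc (0:ℝ) T, |M N t ω - A N t ω|})
        atTop (nhds 0) :=
  time_changed_martingale_approx_general (mΩ := mΩ) P T M Q B A m hQ0 hQmono hQcont hBM hDDS hmcont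
    hQconv hA
end
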